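/- (Theorem 1 of the paper.) Let b, c ∈ ℝ and let F : ℝ³ → ℝ be a function such that (i) F(g₁, g₂, κ) = F(g₁, g₂, κ') for all g₁, g₂, κ, κ' ∈ ℝ (the statistical expectation of the estimator depends only on the reduced shears, since enlarging the intrinsic galaxies by the factor (1−κ) and setting κ ≠ 0 produces observed images identical to the κ = 0 case with the same reduced shears), and (ii) F(g₁, g₂, κ) − g₁·(1 + bκ + c(g₁² + g₂²)) = o(‖(g₁,g₂,κ)‖²) as (g₁,g₂,κ) → (0,0,0). Then b = 0. -/

import Mathlib

/-!
Along the lines `t ↦ t • (1, 0, 0)` and `t ↦ t • (1, 0, 1)` the estimator takes the same values,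
because `F` does not depend on `κ`. Subtracting the two restricted expansions therefore leaves
`b t² = o(t²)` as `t → 0`, which forces `b = 0`.
-/

open Asymptotics Filter Topology

theorem Asymptotics.IsLittleO.comp_smul_sq {E F : Type*} [NormedAddCommGroup E]
    [NormedSpace ℝ E] [Norm F] {f : E → F} (hf : f =o[𝓝 0] fun p => ‖p‖ ^ 2) (v : E) :
    (fun t : ℝ => f (t • v)) =o[𝓝 0] fun t => t ^ 2 := by
  have hline : Tendsto (fun t : ℝ => t • v) (𝓝 0) (𝓝 0) := by
    simpa using (tendsto_id (x := 𝓝 (0 : ℝ))).smul_const v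
  refine (hf.comp_tendsto hline).trans_isBigO (IsBigO.of_bound (‖v‖ ^ 2) ?_)
  filter_upwards with t
  simp [norm_smul, mul_pow, mul_comm]

theorem Asymptotics.eq_zero_of_const_mul_isLittleO_self {α R : Type*} [NormedDivisionRing R]
    {l : Filter α} {f : α → R} {b : R} (hf : ∃ᶠ x in l, f x ≠ 0)
    (h : (fun x => b * f x) =o[l] f) : b = 0 := by
  by_contra hb
  exact isLittleO_irrefl hf ((isLittleO_const_mul_left_iff hb).mp h)

theorem frequently_sq_ne_zero_nhds_zero : ∃ᶠ t : ℝ in 𝓝 0, t ^ 2 ≠ 0 :=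
  ((eventually_mem_nhdsWithin (a := (0 : ℝ)) (s := {0}ᶜ)).frequently.filter_mono
    nhdsWithin_le_nhds).mono fun _ ht => pow_ne_zero 2 ht

/-- Theorem 1 of the paper: if the statistical expectation `F` of a spin-2 shear estimator
depends only on the reduced shears `(g₁, g₂)` (not on the convergence `κ`), and has the
second-order expansion `F(g₁,g₂,κ) = g₁(1 + bκ + c(g₁² + g₂²)) + o(‖(g₁,g₂,κ)‖²)`
(i.e. the method is free of calibration at first order, `a = 1`), then `b = 0`. -/
theorem reduced_shear_theorem (b c : ℝ) (F : ℝ × ℝ × ℝ → ℝ)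
    (hInd : ∀ g₁ g₂ κ κ' : ℝ, F (g₁, g₂, κ) = F (g₁, g₂, κ'))
    (hExp : (fun p : ℝ × ℝ × ℝ =>
          F p - p.1 * (1 + b * p.2.2 + c * (p.1 ^ 2 + p.2.1 ^ 2)))
        =o[nhds 0] fun p : ℝ × ℝ × ℝ => ‖p‖ ^ 2) :
    b = 0 := by
  have hsheared := hExp.comp_smul_sq (1, 0, 0)
  have hdiag := hExp.comp_smul_sq (1, 0, 1)
  refine eq_zero_of_const_mul_isLittleO_self frequently_sq_ne_zero_nhds_zero ?_
  refine (hsheared.sub hdiag).congr_left fun t => ?_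
  simp only [Prod.smul_mk, smul_eq_mul, mul_one, mul_zero]
  rw [hInd t 0 0 t]
  ring
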